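/- arXiv:0806.2375 — 2 statements merged into one kernel-verified Lean document; each statement's English description precedes it below -/
import Mathlib

section
/- If S is a sublattice of an integral lattice L in Euclidean space satisfying the RSSD condition 2L ⊆ S + ann(S), where ann(S) = {x ∈ L ⊗ ℝ : ⟨x, s⟩ = 0 for all s ∈ S}, then the orthogonal involution t_S which acts as −1 on S ⊗ ℝ and +1 on ann(S) maps L into L. -/
theorem AddMonoidHom.apply_eq_sub_of_two_zsmul_eq_add {V : Type*} [AddCommGroup V]
    [IsAddTorsionFree V] (t : V →+ V) {x s a : V} (hs : t s = -s) (ha : t a = a)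
    (h : (2 : ℤ) • x = s + a) : t x = x - s := by
  have : (2 : ℤ) • t x = (2 : ℤ) • (x - s) := by
    rw [← map_zsmul, h, map_add, hs, ha, zsmul_sub, h]
    abel
  exact zsmul_right_injective two_ne_zero this

theorem rssd_involution_preserves_lattice_general
    {V : Type*} [NormedAddCommGroup V] [InnerProductSpace ℝ V]
    (L S : Submodule ℤ V) (hSL : S ≤ L)
    (t : V →ₗ[ℝ] V)
    (htS : ∀ s ∈ Submodule.span ℝ (S : Set V), t s = -s)
    (htAnn : ∀ a : V, (∀ s ∈ S, (inner ℝ a s : ℝ) = 0) → t a = a)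
    (hRSSD : ∀ x ∈ L, ∃ s ∈ S, ∃ a : V,
      (∀ u ∈ S, (inner ℝ a u : ℝ) = 0) ∧ (2 : ℤ) • x = s + a) :
    ∀ x ∈ L, t x ∈ L := by
  intro x hx
  obtain ⟨s, hs, a, ha, hsplit⟩ := hRSSD x hx
  have : IsAddTorsionFree V := .of_isTorsionFree ℝ V
  have htx : t x = x - s :=
    t.toAddMonoidHom.apply_eq_sub_of_two_zsmul_eq_add (htS s (Submodule.subset_span hs))
      (htAnn a ha) hsplit
  rw [htx]
  exact L.sub_mem hx (hSL hs)

/-- If `S` is a sublattice of an integral lattice `L` in Euclidean space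
satisfying the RSSD condition `2L ⊆ S + ann(S)`, then the orthogonal involution `t`
which is `-1` on the ℝ-span of `S` and `+1` on `ann(S)` maps `L` into `L`. -/
theorem rssd_involution_preserves_lattice
    {V : Type*} [NormedAddCommGroup V] [InnerProductSpace ℝ V]
    (L S : Submodule ℤ V) (hSL : S ≤ L)
    (hInt : ∀ x ∈ L, ∀ y ∈ L, ∃ n : ℤ, (inner ℝ x y : ℝ) = n)
    (t : V →ₗ[ℝ] V)
    (htS : ∀ s ∈ Submodule.span ℝ (S : Set V), t s = -s)
    (htAnn : ∀ a : V, (∀ s ∈ S, (inner ℝ a s : ℝ) = 0) → t a = a)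
    (hRSSD : ∀ x ∈ L, ∃ s ∈ S, ∃ a : V,
      (∀ u ∈ S, (inner ℝ a u : ℝ) = 0) ∧ (2 : ℤ) • x = s + a) :
    ∀ x ∈ L, t x ∈ L :=
  rssd_involution_preserves_lattice_general L S hSL t htS htAnn hRSSD
end

section
/- The lattice A2 ⊗ E8 (tensor product of the A2 and E8 root lattices with the product bilinear form) is an even rootless lattice of rank 16 with discriminant group isomorphic to (ℤ/3ℤ)^8 and minimal norm 4. -/
/-!
Write `v ∈ A2 ⊗ E8` as a pair `(x, y)` of vectors of `E8`. Its norm is then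
`|x|² + |y|² + |x - y|²`, and when `v ≠ 0` at least two of `x`, `y`, `x - y` are nonzero. As `E8`
is even and positive definite (its form is a positive combination of squares), its nonzero norms
are at least `2`, so `A2 ⊗ E8` is even with nonzero norms at least `4`.

Since `E8Gram` is invertible over `ℤ`, `A2 ⊗ E8 = (A2 ⊗ 1) (1 ⊗ E8)` has the same image as
`A2 ⊗ 1`, and the cokernel of `A2 ⊗ 1` is `(ℤ/3ℤ)⁸` via `v ↦ (v (0, j) - v (1, j) mod 3)ⱼ`.
-/

open Matrix Kronecker

/-- A Gram matrix for the `A2` root lattice. -/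
def A2Gram : Matrix (Fin 2) (Fin 2) ℤ := !![2, -1; -1, 2]

/-- A Gram matrix for the `E8` root lattice. -/
def E8Gram : Matrix (Fin 8) (Fin 8) ℤ :=
  !![ 2,-1, 0, 0, 0, 0, 0, 0;
     -1, 2,-1, 0, 0, 0, 0, 0;
      0,-1, 2,-1, 0, 0, 0,-1;
      0, 0,-1, 2,-1, 0, 0, 0;
      0, 0, 0,-1, 2,-1, 0, 0;
      0, 0, 0, 0,-1, 2,-1, 0;
      0, 0, 0, 0, 0,-1, 2, 0;
      0, 0,-1, 0, 0, 0, 0, 2]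

/-- Gram matrix of the tensor product lattice `A2 ⊗ E8`. -/
def A2E8Gram : Matrix (Fin 2 × Fin 8) (Fin 2 × Fin 8) ℤ := A2Gram ⊗ₖ E8Gram

namespace Matrix

variable {R l m n p : Type*} [CommRing R] [Fintype m] [Fintype n]

theorem kronecker_mulVec_apply (A : Matrix l m R) (B : Matrix p n R) (v : m × n → R) (a : l)
    (i : p) :
    ((A ⊗ₖ B) *ᵥ v) (a, i) = ∑ b, A a b * (B *ᵥ fun j => v (b, j)) i := by
  simp only [mulVec, dotProduct, Fintype.sum_prod_type, kroneckerMap_apply, Finset.mul_sum]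
  exact Finset.sum_congr rfl fun _ _ => Finset.sum_congr rfl fun _ _ => by ring

theorem dotProduct_kronecker_mulVec (A : Matrix m m R) (B : Matrix n n R) (v : m × n → R) :
    v ⬝ᵥ (A ⊗ₖ B) *ᵥ v =
      ∑ a, ∑ b, A a b * ((fun j => v (a, j)) ⬝ᵥ B *ᵥ fun j => v (b, j)) := by
  simp only [dotProduct, Fintype.sum_prod_type, kronecker_mulVec_apply, Finset.mul_sum]
  rw [Finset.sum_congr rfl fun a _ => Finset.sum_comm]
  exact Finset.sum_congr rfl fun _ _ => Finset.sum_congr rfl fun _ _ =>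
    Finset.sum_congr rfl fun _ _ => by ring

theorem range_mulVecLin_kronecker_of_mul_eq_one [DecidableEq m] [DecidableEq n] (A : Matrix m m R)
    {B B' : Matrix n n R} (h : B * B' = 1) :
    LinearMap.range (A ⊗ₖ B).mulVecLin = LinearMap.range (A ⊗ₖ (1 : Matrix n n R)).mulVecLin := by
  have hsurj : Function.Surjective (1 ⊗ₖ B : Matrix (m × n) (m × n) R).mulVecLin := fun v =>
    ⟨(1 ⊗ₖ B') *ᵥ v, by
      rw [mulVecLin_apply, mulVec_mulVec, ← mul_kronecker_mul, mul_one, h, one_kronecker_one,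
        one_mulVec]⟩
  have hfactor : A ⊗ₖ B = (A ⊗ₖ 1) * (1 ⊗ₖ B) := by rw [← mul_kronecker_mul, mul_one, one_mul]
  rw [hfactor, mulVecLin_mul]
  exact LinearMap.range_comp_of_range_eq_top _ (LinearMap.range_eq_top.2 hsurj)

end Matrix

section A2Kronecker

variable {n : Type*} [Fintype n]

theorem dotProduct_A2Gram_kronecker_mulVec (B : Matrix n n ℤ) (v : Fin 2 × n → ℤ) :
    v ⬝ᵥ (A2Gram ⊗ₖ B) *ᵥ v =
      (fun j => v (0, j)) ⬝ᵥ B *ᵥ (fun j => v (0, j)) +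
      (fun j => v (1, j)) ⬝ᵥ B *ᵥ (fun j => v (1, j)) +
      ((fun j => v (0, j)) - fun j => v (1, j)) ⬝ᵥ
        B *ᵥ ((fun j => v (0, j)) - fun j => v (1, j)) := by
  simp only [dotProduct_kronecker_mulVec, Fin.sum_univ_two, mulVec_sub, sub_dotProduct,
    dotProduct_sub]
  simp only [A2Gram, of_apply, cons_val', cons_val_zero, cons_val_one, empty_val',
    cons_val_fin_one]
  ring

theorem even_dotProduct_A2Gram_kronecker_mulVec {B : Matrix n n ℤ}
    (hB : ∀ x, Even (x ⬝ᵥ B *ᵥ x)) (v : Fin 2 × n → ℤ) :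
    Even (v ⬝ᵥ (A2Gram ⊗ₖ B) *ᵥ v) := by
  rw [dotProduct_A2Gram_kronecker_mulVec]
  exact ((hB _).add (hB _)).add (hB _)

theorem le_dotProduct_A2Gram_kronecker_mulVec {B : Matrix n n ℤ} {μ : ℤ} (hμ : 0 ≤ μ)
    (hB : ∀ x, x ≠ 0 → μ ≤ x ⬝ᵥ B *ᵥ x) {v : Fin 2 × n → ℤ} (hv : v ≠ 0) :
    2 * μ ≤ v ⬝ᵥ (A2Gram ⊗ₖ B) *ᵥ v := by
  have hB₀ : ∀ x, 0 ≤ x ⬝ᵥ B *ᵥ x := fun x => by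
    rcases eq_or_ne x 0 with rfl | hx
    · simp
    · exact hμ.trans (hB x hx)
  rw [dotProduct_A2Gram_kronecker_mulVec]
  set x := fun j => v (0, j)
  set y := fun j => v (1, j)
  rcases eq_or_ne x 0 with hx | hx
  · have hy : y ≠ 0 := fun hy => hv <| funext fun
      | (0, j) => congrFun hx j
      | (1, j) => congrFun hy j
    have hxy : x - y ≠ 0 := by simpa [hx] using hy
    linarith [hB₀ x, hB y hy, hB _ hxy]
  · rcases eq_or_ne y 0 with hy | hy
    · have hxy : x - y ≠ 0 := by simpa [hy] using hx
      linarith [hB x hx, hB₀ y, hB _ hxy]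
    · linarith [hB x hx, hB y hy, hB₀ (x - y)]

end A2Kronecker

section E8

theorem dotProduct_E8Gram_mulVec (x : Fin 8 → ℤ) :
    x ⬝ᵥ E8Gram *ᵥ x =
      2 * (x 0 ^ 2 + x 1 ^ 2 + x 2 ^ 2 + x 3 ^ 2 + x 4 ^ 2 + x 5 ^ 2 + x 6 ^ 2 + x 7 ^ 2
        - x 0 * x 1 - x 1 * x 2 - x 2 * x 3 - x 3 * x 4 - x 4 * x 5 - x 5 * x 6
        - x 2 * x 7) := by
  simp only [dotProduct, mulVec, E8Gram, of_apply, cons_val', cons_val_fin_one, Fin.sum_univ_eight,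
    cons_val_zero, cons_val_one, cons_val]
  ring

theorem even_dotProduct_E8Gram_mulVec (x : Fin 8 → ℤ) : Even (x ⬝ᵥ E8Gram *ᵥ x) := by
  rw [dotProduct_E8Gram_mulVec]
  exact even_two_mul _

-- the `LDLᵀ` decomposition of `E8Gram`, eliminating `x 0, …, x 6` in turn
theorem dotProduct_E8Gram_mulVec_eq_sum_sq (x : Fin 8 → ℤ) :
    840 * (x ⬝ᵥ E8Gram *ᵥ x) =
      420 * (2 * x 0 - x 1) ^ 2 + 140 * (3 * x 1 - 2 * x 2) ^ 2
      + 70 * (4 * x 2 - 3 * x 3 - 3 * x 7) ^ 2 + 42 * (5 * x 3 - 4 * x 4 - 3 * x 7) ^ 2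
      + 28 * (6 * x 4 - 5 * x 5 - 3 * x 7) ^ 2 + 20 * (7 * x 5 - 6 * x 6 - 3 * x 7) ^ 2
      + 15 * (8 * x 6 - 3 * x 7) ^ 2 + 105 * x 7 ^ 2 := by
  rw [dotProduct_E8Gram_mulVec]
  ring

theorem dotProduct_E8Gram_mulVec_pos {x : Fin 8 → ℤ} (hx : x ≠ 0) : 0 < x ⬝ᵥ E8Gram *ᵥ x := by
  by_contra! h
  have hsq := dotProduct_E8Gram_mulVec_eq_sum_sq x
  have hzero : (2 * x 0 - x 1) ^ 2 = 0 ∧ (3 * x 1 - 2 * x 2) ^ 2 = 0 ∧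
      (4 * x 2 - 3 * x 3 - 3 * x 7) ^ 2 = 0 ∧ (5 * x 3 - 4 * x 4 - 3 * x 7) ^ 2 = 0 ∧
      (6 * x 4 - 5 * x 5 - 3 * x 7) ^ 2 = 0 ∧ (7 * x 5 - 6 * x 6 - 3 * x 7) ^ 2 = 0 ∧
      (8 * x 6 - 3 * x 7) ^ 2 = 0 ∧ x 7 ^ 2 = 0 := by
    refine ⟨?_, ?_, ?_, ?_, ?_, ?_, ?_, ?_⟩ <;>
      linarith [sq_nonneg (2 * x 0 - x 1), sq_nonneg (3 * x 1 - 2 * x 2),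
        sq_nonneg (4 * x 2 - 3 * x 3 - 3 * x 7), sq_nonneg (5 * x 3 - 4 * x 4 - 3 * x 7),
        sq_nonneg (6 * x 4 - 5 * x 5 - 3 * x 7), sq_nonneg (7 * x 5 - 6 * x 6 - 3 * x 7),
        sq_nonneg (8 * x 6 - 3 * x 7), sq_nonneg (x 7)]
  simp only [sq_eq_zero_iff] at hzero
  exact hx <| funext fun i => by fin_cases i <;>
    simp only [Fin.zero_eta, Fin.mk_one, Fin.reduceFinMk, Pi.zero_apply] <;> omega

theorem two_le_dotProduct_E8Gram_mulVec {x : Fin 8 → ℤ} (hx : x ≠ 0) :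
    2 ≤ x ⬝ᵥ E8Gram *ᵥ x := by
  obtain ⟨k, hk⟩ := even_dotProduct_E8Gram_mulVec x
  have := dotProduct_E8Gram_mulVec_pos hx
  omega

def E8GramInv : Matrix (Fin 8) (Fin 8) ℤ :=
  !![ 4, 7,10, 8, 6, 4, 2, 5;
      7,14,20,16,12, 8, 4,10;
     10,20,30,24,18,12, 6,15;
      8,16,24,20,15,10, 5,12;
      6,12,18,15,12, 8, 4, 9;
      4, 8,12,10, 8, 6, 3, 6;
      2, 4, 6, 5, 4, 3, 2, 3;
      5,10,15,12, 9, 6, 3, 8]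

theorem E8Gram_mul_E8GramInv : E8Gram * E8GramInv = 1 := by decide

end E8

section A2Discriminant

variable (n : Type*)

def A2DiscriminantMap : (Fin 2 × n → ℤ) →ₗ[ℤ] (n → ZMod 3) :=
  LinearMap.pi fun j => (Int.castAddHom (ZMod 3)).toIntLinearMap ∘ₗ
    (LinearMap.proj (R := ℤ) (φ := fun _ : Fin 2 × n => ℤ) (0, j) - LinearMap.proj (1, j))

variable {n}

@[simp]
theorem A2DiscriminantMap_apply (v : Fin 2 × n → ℤ) (j : n) :
    A2DiscriminantMap n v j = ((v (0, j) - v (1, j) : ℤ) : ZMod 3) := rfl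

theorem A2DiscriminantMap_surjective : Function.Surjective (A2DiscriminantMap n) := fun t =>
  ⟨fun p => if p.1 = 0 then (t p.2).val else 0, funext fun j => by simp⟩

variable [Fintype n] [DecidableEq n]

theorem ker_A2DiscriminantMap :
    LinearMap.ker (A2DiscriminantMap n) =
      LinearMap.range (A2Gram ⊗ₖ (1 : Matrix n n ℤ)).mulVecLin := by
  ext v
  simp only [LinearMap.mem_ker, LinearMap.mem_range, mulVecLin_apply]
  constructor
  · intro hv
    have h3 (j : n) : (3 : ℤ) ∣ v (0, j) - v (1, j) := by
      simpa using (ZMod.intCast_zmod_eq_zero_iff_dvd _ 3).1 (congrFun hv j)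
    choose d hd using h3
    refine ⟨fun p => ![v (0, p.2) - d p.2, v (1, p.2) + d p.2] p.1, funext ?_⟩
    rintro ⟨i, j⟩
    fin_cases i <;>
      simp only [A2Gram, Fin.zero_eta, Fin.mk_one, kronecker_mulVec_apply, of_apply, cons_val',
        cons_val_fin_one, cons_val_zero, cons_val_one, one_mulVec, Fin.sum_univ_two] <;>
      linarith [hd j]
  · rintro ⟨w, rfl⟩
    funext j
    simp only [A2Gram, A2DiscriminantMap_apply, kronecker_mulVec_apply, of_apply, cons_val',
      cons_val_fin_one, cons_val_zero, cons_val_one, one_mulVec, Fin.sum_univ_two, Pi.zero_apply]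
    push_cast
    ring_nf
    reduce_mod_char

noncomputable def quotientRangeA2GramKroneckerEquiv {B B' : Matrix n n ℤ} (h : B * B' = 1) :
    ((Fin 2 × n → ℤ) ⧸ LinearMap.range (A2Gram ⊗ₖ B).mulVecLin) ≃ₗ[ℤ] (n → ZMod 3) :=
  (Submodule.quotEquivOfEq _ _ <| (range_mulVecLin_kronecker_of_mul_eq_one A2Gram h).trans
    ker_A2DiscriminantMap.symm).trans
    ((A2DiscriminantMap n).quotKerEquivOfSurjective A2DiscriminantMap_surjective)

end A2Discriminant

/-- The lattice `A2 ⊗ E8` is an even rootless lattice of rank 16 with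
discriminant group isomorphic to `(ℤ/3ℤ)^8` and minimal norm `4`. -/
theorem A2_tensor_E8_properties :
    Fintype.card (Fin 2 × Fin 8) = 16 ∧
    (∀ v : Fin 2 × Fin 8 → ℤ, Even (v ⬝ᵥ A2E8Gram.mulVec v)) ∧
    (∀ v : Fin 2 × Fin 8 → ℤ, v ≠ 0 → 4 ≤ v ⬝ᵥ A2E8Gram.mulVec v) ∧
    (∃ v : Fin 2 × Fin 8 → ℤ, v ⬝ᵥ A2E8Gram.mulVec v = 4) ∧
    (∀ v : Fin 2 × Fin 8 → ℤ, v ⬝ᵥ A2E8Gram.mulVec v ≠ 2) ∧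
    Nonempty (((Fin 2 × Fin 8 → ℤ) ⧸ LinearMap.range A2E8Gram.mulVecLin)
      ≃+ (Fin 8 → ZMod 3)) := by
  have four_le : ∀ v : Fin 2 × Fin 8 → ℤ, v ≠ 0 → 4 ≤ v ⬝ᵥ A2E8Gram *ᵥ v := fun v hv =>
    le_dotProduct_A2Gram_kronecker_mulVec zero_le_two (fun _ => two_le_dotProduct_E8Gram_mulVec)
      hv
  refine ⟨rfl, even_dotProduct_A2Gram_kronecker_mulVec even_dotProduct_E8Gram_mulVec, four_le,
    ⟨Pi.single (0, 0) 1, ?_⟩, fun v => ?_,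
    ⟨(quotientRangeA2GramKroneckerEquiv E8Gram_mul_E8GramInv).toAddEquiv⟩⟩
  · rw [mulVec_single_one, single_one_dotProduct]
    rfl
  · rcases eq_or_ne v 0 with rfl | hv
    · simp
    · linarith [four_le v hv]
end
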